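/- arXiv:2212.11191 — 2 statements merged into one kernel-verified Lean document; each statement's English description precedes it below -/
import Mathlib

section
/- For fixed t₁, t₂ ∈ ℝ, the partial derivative of Φ_ρ(t₁, t₂) with respect to ρ ∈ (-1,1) equals (1/(2π√(1-ρ²)))·exp(-(t₁² - 2ρt₁t₂ + t₂²)/(2(1-ρ²))). -/
/-- Standard normal CDF. -/
noncomputable def stdNormalCDF (t : ℝ) : ℝ :=
  ∫ x in Set.Iic t, (1 / Real.sqrt (2 * Real.pi)) * Real.exp (-x ^ 2 / 2)

/-- Standard bivariate normal density with correlation `ρ`. -/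
noncomputable def biNormalDensity (ρ x y : ℝ) : ℝ :=
  (1 / (2 * Real.pi * Real.sqrt (1 - ρ ^ 2))) *
    Real.exp (-(x ^ 2 - 2 * ρ * x * y + y ^ 2) / (2 * (1 - ρ ^ 2)))

/-- `Φ_ρ(t₁, t₂) = P[X ≤ t₁ ∧ Y ≤ t₂]` for jointly standard Gaussian `(X, Y)` with
correlation `ρ`.  For `ρ = ±1` the (degenerate) joint distribution gives the
indicated closed forms; for `ρ ∈ (-1, 1)` it is the double integral of the density. -/
noncomputable def biNormalCDF (ρ t₁ t₂ : ℝ) : ℝ :=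
  if ρ = 1 then stdNormalCDF (min t₁ t₂)
  else if ρ = -1 then max (stdNormalCDF t₁ + stdNormalCDF t₂ - 1) 0
  else ∫ x in Set.Iic t₁, ∫ y in Set.Iic t₂, biNormalDensity ρ x y

/-!
Factoring the density as `φ(x) φ((y - ρx) / √(1 - ρ²)) / √(1 - ρ²)` (given `X = x`, `Y` is
`N(ρx, 1 - ρ²)`) gives `Φ_ρ(t₁, t₂) = ∫_{x ≤ t₁} φ(x) Φ((t₂ - ρx) / √(1 - ρ²)) dx`.
The `ρ`-derivative of this integrand is the `x`-derivative of `x ↦ φ_ρ(x, t₂)`. Differentiating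
under the integral sign (dominated by a multiple of `(|t₂| + |x|) e^{-x²/2}` while `1 - ρ²` stays
away from `0`) and integrating that `x`-derivative over `(-∞, t₁]` leaves `φ_ρ(t₁, t₂)`.
-/

open Real Set Filter Topology MeasureTheory ProbabilityTheory

theorem integral_Iic_of_hasDerivAt_of_integrableOn {E : Type*} [NormedAddCommGroup E]
    [NormedSpace ℝ E] [CompleteSpace E] {f f' : ℝ → E} {a : ℝ}
    (hderiv : ∀ x ∈ Iic a, HasDerivAt f (f' x) x) (f'int : IntegrableOn f' (Iic a))
    (fint : IntegrableOn f (Iic a)) : ∫ x in Iic a, f' x = f a := by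
  rw [integral_Iic_of_hasDerivAt_of_tendsto' hderiv f'int
    (tendsto_zero_of_hasDerivAt_of_integrableOn_Iic hderiv f'int fint), sub_zero]

theorem continuous_gaussianPDFReal (μ : ℝ) (v : NNReal) : Continuous (gaussianPDFReal μ v) := by
  rw [gaussianPDFReal_def]
  fun_prop

theorem stdNormalCDF_eq_integral (t : ℝ) :
    stdNormalCDF t = ∫ x in Iic t, gaussianPDFReal 0 1 x := by
  simp [stdNormalCDF, gaussianPDFReal, div_eq_inv_mul]

theorem stdNormalCDF_eq_cdf : stdNormalCDF = cdf (gaussianReal 0 1) := by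
  ext t
  rw [cdf_eq_real, measureReal_def, gaussianReal_apply_eq_integral _ one_ne_zero,
    ENNReal.toReal_ofReal (setIntegral_nonneg measurableSet_Iic
      fun x _ => gaussianPDFReal_nonneg 0 1 x), stdNormalCDF_eq_integral]

theorem hasDerivAt_stdNormalCDF (t : ℝ) :
    HasDerivAt stdNormalCDF (gaussianPDFReal 0 1 t) t := by
  have hint := integrable_gaussianPDFReal 0 1
  have hsplit :
      stdNormalCDF = fun t => stdNormalCDF 0 + ∫ x in 0..t, gaussianPDFReal 0 1 x := by
    ext t
    simp only [stdNormalCDF_eq_integral]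
    rw [← intervalIntegral.integral_Iic_sub_Iic hint.integrableOn hint.integrableOn]
    ring
  rw [hsplit]
  exact (intervalIntegral.integral_hasDerivAt_right hint.intervalIntegrable
    ((continuous_gaussianPDFReal 0 1).stronglyMeasurableAtFilter _ _)
    (continuous_gaussianPDFReal 0 1).continuousAt).const_add _

theorem continuous_stdNormalCDF : Continuous stdNormalCDF :=
  continuous_iff_continuousAt.2 fun t => (hasDerivAt_stdNormalCDF t).continuousAt

theorem integral_Iic_gaussianPDFReal_sub_div {s : ℝ} (hs : 0 < s) (c t : ℝ) :
    ∫ y in Iic t, gaussianPDFReal 0 1 ((y - c) / s) / s = stdNormalCDF ((t - c) / s) := by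
  have hderiv (y : ℝ) : HasDerivAt (fun y => stdNormalCDF ((y - c) / s))
      (gaussianPDFReal 0 1 ((y - c) / s) / s) y := by
    simpa [Function.comp_def, div_eq_mul_inv] using
      (hasDerivAt_stdNormalCDF _).comp y (((hasDerivAt_id' y).sub_const c).div_const s)
  have hint : Integrable fun y => gaussianPDFReal 0 1 ((y - c) / s) / s :=
    (((integrable_gaussianPDFReal 0 1).comp_div hs.ne').comp_sub_right c).div_const s
  have hlim : Tendsto (fun y => stdNormalCDF ((y - c) / s)) atBot (𝓝 0) := by
    rw [stdNormalCDF_eq_cdf]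
    refine (tendsto_cdf_atBot (μ := gaussianReal 0 1)).comp (Tendsto.atBot_div_const hs ?_)
    exact tendsto_atBot_add_const_right _ (-c) tendsto_id
  rw [integral_Iic_of_hasDerivAt_of_tendsto' (fun y _ => hderiv y) hint.integrableOn hlim,
    sub_zero]

theorem integrable_gaussianPDFReal_mul_stdNormalCDF_comp {g : ℝ → ℝ} (hg : Continuous g) :
    Integrable fun x => gaussianPDFReal 0 1 x * stdNormalCDF (g x) := by
  refine (integrable_gaussianPDFReal 0 1).mono'
    ((continuous_gaussianPDFReal 0 1).mul
      (continuous_stdNormalCDF.comp hg)).aestronglyMeasurable (ae_of_all _ fun x => ?_)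
  rw [norm_mul, norm_of_nonneg (gaussianPDFReal_nonneg 0 1 x), stdNormalCDF_eq_cdf,
    norm_of_nonneg (cdf_nonneg _ _)]
  exact mul_le_of_le_one_right (gaussianPDFReal_nonneg 0 1 x) (cdf_le_one _ _)

theorem biNormalDensity_eq_mul_gaussianPDFReal {r : ℝ} (hr : 0 < 1 - r ^ 2) (x y : ℝ) :
    biNormalDensity r x y = gaussianPDFReal 0 1 x *
      (gaussianPDFReal 0 1 ((y - r * x) / √(1 - r ^ 2)) / √(1 - r ^ 2)) := by
  have h2π : √(2 * π) ^ 2 = 2 * π := sq_sqrt (by positivity)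
  have hexp : -(x ^ 2 - 2 * r * x * y + y ^ 2) / (2 * (1 - r ^ 2)) =
      -x ^ 2 / 2 + -((y - r * x) / √(1 - r ^ 2)) ^ 2 / 2 := by
    rw [div_pow, sq_sqrt hr.le]
    field_simp
    ring
  simp only [biNormalDensity, gaussianPDFReal, NNReal.coe_one, mul_one, sub_zero, hexp, exp_add]
  field_simp
  rw [h2π]

theorem integral_Iic_biNormalDensity {r : ℝ} (hr : 0 < 1 - r ^ 2) (x t : ℝ) :
    ∫ y in Iic t, biNormalDensity r x y =
      gaussianPDFReal 0 1 x * stdNormalCDF ((t - r * x) / √(1 - r ^ 2)) := by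
  simp only [biNormalDensity_eq_mul_gaussianPDFReal hr, integral_const_mul,
    integral_Iic_gaussianPDFReal_sub_div (sqrt_pos.2 hr)]

theorem biNormalCDF_eq_integral {r : ℝ} (hr : r ∈ Ioo (-1) 1) (t₁ t₂ : ℝ) :
    biNormalCDF r t₁ t₂ =
      ∫ x in Iic t₁, gaussianPDFReal 0 1 x * stdNormalCDF ((t₂ - r * x) / √(1 - r ^ 2)) := by
  have h : 0 < 1 - r ^ 2 := by nlinarith [hr.1, hr.2]
  rw [biNormalCDF, if_neg hr.2.ne, if_neg hr.1.ne']
  exact setIntegral_congr_fun measurableSet_Iic fun x _ => integral_Iic_biNormalDensity h x t₂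

theorem biNormalDensity_nonneg (r x y : ℝ) : 0 ≤ biNormalDensity r x y := by
  unfold biNormalDensity
  positivity

theorem biNormalDensity_le {c r : ℝ} (hc : 0 < c) (hcr : c ≤ 1 - r ^ 2) (x y : ℝ) :
    biNormalDensity r x y ≤ 1 / (2 * π * √c) * exp (-(1 / 2) * x ^ 2) := by
  have hr : 0 < 1 - r ^ 2 := hc.trans_le hcr
  unfold biNormalDensity
  gcongr
  rw [div_le_iff₀ (by positivity)]
  nlinarith [sq_nonneg (y - r * x)]

theorem hasDerivAt_biNormalDensity_left (r x y : ℝ) :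
    HasDerivAt (fun x => biNormalDensity r x y)
      (biNormalDensity r x y * ((r * y - x) / (1 - r ^ 2))) x := by
  have hq : HasDerivAt (fun x => -(x ^ 2 - 2 * r * x * y + y ^ 2) / (2 * (1 - r ^ 2)))
      ((r * y - x) / (1 - r ^ 2)) x := by
    refine ((((hasDerivAt_pow 2 x).sub (((hasDerivAt_id' x).const_mul (2 * r)).mul_const
      y)).add_const (y ^ 2)).neg.div_const (2 * (1 - r ^ 2))).congr_deriv ?_
    rw [mul_comm 2, ← div_div]
    ring
  refine (hq.exp.const_mul (1 / (2 * π * √(1 - r ^ 2)))).congr_deriv ?_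
  simp only [biNormalDensity]
  ring

theorem integrable_biNormalDensity_left {r : ℝ} (hr : 0 < 1 - r ^ 2) (y : ℝ) :
    Integrable fun x => biNormalDensity r x y :=
  ((integrable_exp_neg_mul_sq (by norm_num : (0 : ℝ) < 1 / 2)).const_mul _).mono'
    (continuous_iff_continuousAt.2 fun x =>
      (hasDerivAt_biNormalDensity_left r x y).continuousAt).aestronglyMeasurable
    (ae_of_all _ fun x => by
      rw [norm_of_nonneg (biNormalDensity_nonneg r x y)]
      exact biNormalDensity_le hr le_rfl x y)

theorem hasDerivAt_sub_mul_div_sqrt_one_sub_sq {r : ℝ} (hr : 0 < 1 - r ^ 2) (x t : ℝ) :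
    HasDerivAt (fun r => (t - r * x) / √(1 - r ^ 2))
      ((r * t - x) / ((1 - r ^ 2) * √(1 - r ^ 2))) r := by
  have hs : 0 < √(1 - r ^ 2) := sqrt_pos.2 hr
  have hsqrt : HasDerivAt (fun r => √(1 - r ^ 2)) (-r / √(1 - r ^ 2)) r := by
    refine (((hasDerivAt_pow 2 r).const_sub 1).sqrt hr.ne').congr_deriv ?_
    field_simp
    ring
  refine ((((hasDerivAt_id' r).mul_const x).const_sub t).div hsqrt hs.ne').congr_deriv ?_
  field_simp
  rw [sq_sqrt hr.le]
  ring

theorem hasDerivAt_gaussianPDFReal_mul_stdNormalCDF {r : ℝ} (hr : 0 < 1 - r ^ 2) (x y : ℝ) :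
    HasDerivAt (fun r => gaussianPDFReal 0 1 x * stdNormalCDF ((y - r * x) / √(1 - r ^ 2)))
      (biNormalDensity r x y * ((r * y - x) / (1 - r ^ 2))) r := by
  refine (((hasDerivAt_stdNormalCDF _).comp r
    (hasDerivAt_sub_mul_div_sqrt_one_sub_sq hr x y)).const_mul _).congr_deriv ?_
  rw [biNormalDensity_eq_mul_gaussianPDFReal hr]
  field_simp

theorem integrable_add_abs_mul_exp_neg_mul_sq {b : ℝ} (hb : 0 < b) (a : ℝ) :
    Integrable fun x : ℝ => (a + |x|) * exp (-b * x ^ 2) := by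
  refine ((integrable_exp_neg_mul_sq hb).const_mul a).add
    (integrable_mul_exp_neg_mul_sq hb).abs |>.congr (ae_of_all _ fun x => ?_)
  simp [add_mul, abs_mul, abs_of_pos (exp_pos _)]

theorem norm_biNormalDensity_mul_le {c r : ℝ} (hc : 0 < c) (hcr : c ≤ 1 - r ^ 2) (x y : ℝ) :
    ‖biNormalDensity r x y * ((r * y - x) / (1 - r ^ 2))‖ ≤
      1 / (2 * π * √c) / c * ((|y| + |x|) * exp (-(1 / 2) * x ^ 2)) := by
  have hr : 0 < 1 - r ^ 2 := hc.trans_le hcr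
  have hr1 : |r| ≤ 1 := sq_le_one_iff_abs_le_one r |>.1 (by linarith)
  have hnum : |r * y - x| ≤ |y| + |x| := calc
    |r * y - x| ≤ |r| * |y| + |x| := by rw [← abs_mul]; exact abs_sub _ _
    _ ≤ |y| + |x| := by gcongr; nlinarith [abs_nonneg y]
  rw [norm_mul, norm_of_nonneg (biNormalDensity_nonneg r x y), norm_div, norm_of_nonneg hr.le,
    Real.norm_eq_abs]
  calc biNormalDensity r x y * (|r * y - x| / (1 - r ^ 2))
      ≤ 1 / (2 * π * √c) * exp (-(1 / 2) * x ^ 2) * ((|y| + |x|) / c) := by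
        gcongr
        exact biNormalDensity_le hc hcr x y
    _ = _ := by ring

theorem hasDerivAt_integral_gaussianPDFReal_mul_stdNormalCDF {ρ : ℝ} (hρ : 0 < 1 - ρ ^ 2)
    (t₁ t₂ : ℝ) :
    HasDerivAt
      (fun r => ∫ x in Iic t₁, gaussianPDFReal 0 1 x * stdNormalCDF ((t₂ - r * x) / √(1 - r ^ 2)))
      (biNormalDensity ρ t₁ t₂) ρ := by
  set c := (1 - ρ ^ 2) / 2
  have hc : 0 < c := by positivity
  have hnhds : {r | c < 1 - r ^ 2} ∈ 𝓝 ρ :=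
    (isOpen_lt continuous_const (by fun_prop)).mem_nhds
      (by simp only [mem_ofPred_eq, c]; linarith)
  obtain ⟨hF'int, hderiv⟩ := hasDerivAt_integral_of_dominated_loc_of_deriv_le
    (μ := volume.restrict (Iic t₁))
    (F := fun r x => gaussianPDFReal 0 1 x * stdNormalCDF ((t₂ - r * x) / √(1 - r ^ 2)))
    (F' := fun r x => biNormalDensity r x t₂ * ((r * t₂ - x) / (1 - r ^ 2))) hnhds
    (Eventually.of_forall fun r => (integrable_gaussianPDFReal_mul_stdNormalCDF_comp
      (g := fun x => (t₂ - r * x) / √(1 - r ^ 2)) (by fun_prop)).restrict.aestronglyMeasurable)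
    (integrable_gaussianPDFReal_mul_stdNormalCDF_comp
      (g := fun x => (t₂ - ρ * x) / √(1 - ρ ^ 2)) (by fun_prop)).restrict
    ((integrable_biNormalDensity_left hρ t₂).aestronglyMeasurable.restrict.fun_mul
      (by fun_prop : Continuous fun x => (ρ * t₂ - x) / (1 - ρ ^ 2)).aestronglyMeasurable)
    (ae_of_all _ fun x r hr => norm_biNormalDensity_mul_le hc hr.le x t₂)
    ((integrable_add_abs_mul_exp_neg_mul_sq (by norm_num) |t₂|).const_mul _).restrict
    (ae_of_all _ fun x r hr => hasDerivAt_gaussianPDFReal_mul_stdNormalCDF (hc.trans hr) x t₂)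
  rwa [integral_Iic_of_hasDerivAt_of_integrableOn
    (fun x _ => hasDerivAt_biNormalDensity_left ρ x t₂) hF'int
    (integrable_biNormalDensity_left hρ t₂).integrableOn] at hderiv

/-- The partial derivative of `Φ_ρ(t₁, t₂)` with respect to the correlation
`ρ ∈ (-1, 1)` equals `(1/(2π√(1-ρ²))) · exp(-(t₁² - 2ρt₁t₂ + t₂²)/(2(1-ρ²)))`. -/
theorem biNormalCDF_hasDerivAt_rho (ρ t₁ t₂ : ℝ) (hρ : ρ ∈ Set.Ioo (-1 : ℝ) 1) :
    HasDerivAt (fun r => biNormalCDF r t₁ t₂)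
      ((1 / (2 * Real.pi * Real.sqrt (1 - ρ ^ 2))) *
        Real.exp (-(t₁ ^ 2 - 2 * ρ * t₁ * t₂ + t₂ ^ 2) / (2 * (1 - ρ ^ 2)))) ρ := by
  have hρ' : 0 < 1 - ρ ^ 2 := by nlinarith [hρ.1, hρ.2]
  refine (hasDerivAt_integral_gaussianPDFReal_mul_stdNormalCDF hρ' t₁ t₂).congr_of_eventuallyEq
    ?_
  filter_upwards [Ioo_mem_nhds hρ.1 hρ.2] with r hr
  exact biNormalCDF_eq_integral hr t₁ t₂
end

section
/- Let ρ₁, ρ₂ ∈ (-1,0), p₁, p₂ > 0, and suppose (x, y) ∈ ℝ² satisfies the system: p₁(1 - 2Φ(√((1-ρ₁)/(1+ρ₁))·x)) = p₂·Φ((y - ρ₂x)/√(1-ρ₂²)) and p₁(1 - 2Φ(√((1-ρ₁)/(1+ρ₁))·y)) = -p₂·Φ((-x + ρ₂y)/√(1-ρ₂²)). Then x < 0, y > 0, and y = -x. -/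
open MeasureTheory Real Set

lemma gauss_int : Integrable (fun x : ℝ => (1 / Real.sqrt (2 * Real.pi)) * Real.exp (-x ^ 2 / 2)) := by
  have : Integrable (fun x : ℝ => Real.exp (-(1/2 : ℝ) * x ^ 2)) := integrable_exp_neg_mul_sq (by norm_num)
  have h2 := this.const_mul (1 / Real.sqrt (2 * Real.pi))
  convert h2 using 2 with x
  ring_nf

lemma gauss_pos (x : ℝ) : 0 < (1 / Real.sqrt (2 * Real.pi)) * Real.exp (-x ^ 2 / 2) := by
  positivity

lemma cdf_strictMono : StrictMono stdNormalCDF := by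
  intro a b hab
  unfold stdNormalCDF
  have h := intervalIntegral.integral_Iic_sub_Iic (gauss_int.integrableOn) (gauss_int.integrableOn) (a := a) (b := b)
  have hpos : 0 < ∫ x in a..b, (1 / Real.sqrt (2 * Real.pi)) * Real.exp (-x ^ 2 / 2) := by
    apply intervalIntegral.intervalIntegral_pos_of_pos (f := fun x => (1 / Real.sqrt (2 * Real.pi)) * Real.exp (-x ^ 2 / 2))
    · exact gauss_int.intervalIntegrable (a := a) (b := b)
    · exact fun x => gauss_pos x
    · exact hab
  linarith [h ▸ hpos]

lemma cdf_total : (∫ x : ℝ, (1 / Real.sqrt (2 * Real.pi)) * Real.exp (-x ^ 2 / 2)) = 1 := by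
  have h : (fun x : ℝ => (1 / Real.sqrt (2 * Real.pi)) * Real.exp (-x ^ 2 / 2))
      = fun x : ℝ => (1 / Real.sqrt (2 * Real.pi)) * Real.exp (-(1/2 : ℝ) * x ^ 2) := by
    funext x; ring_nf
  rw [h, integral_const_mul, integral_gaussian]
  have h2 : Real.pi / (1/2 : ℝ) = 2 * Real.pi := by ring
  rw [h2, one_div, inv_mul_cancel₀]
  exact (Real.sqrt_pos.mpr (by positivity)).ne'

lemma cdf_add_neg (t : ℝ) : stdNormalCDF t + stdNormalCDF (-t) = 1 := by
  have h1 : stdNormalCDF (-t) = ∫ x in Ioi t, (1 / Real.sqrt (2 * Real.pi)) * Real.exp (-x ^ 2 / 2) := by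
    unfold stdNormalCDF
    have := integral_comp_neg_Iic (-t) (fun x : ℝ => (1 / Real.sqrt (2 * Real.pi)) * Real.exp (-x ^ 2 / 2))
    rw [neg_neg] at this
    rw [← this]
    exact setIntegral_congr_fun measurableSet_Iic (fun x _ => by ring_nf)
  have hcompl := integral_add_compl (measurableSet_Iic (a := t)) gauss_int
  rw [compl_Iic] at hcompl
  rw [h1]
  unfold stdNormalCDF
  linarith [cdf_total, hcompl]

lemma cdf_zero : stdNormalCDF 0 = 1/2 := by
  have := cdf_add_neg 0
  rw [neg_zero] at this
  linarith

lemma cdf_pos (t : ℝ) : 0 < stdNormalCDF t := by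
  have h1 : (0:ℝ) ≤ stdNormalCDF (t - 1) :=
    setIntegral_nonneg measurableSet_Iic (fun x _ => (gauss_pos x).le)
  exact lt_of_le_of_lt h1 (cdf_strictMono (by linarith))

/-- Any solution `(x, y)` of the critical-point system for the soundness function
satisfies `x < 0`, `y > 0`, and `y = -x`. -/
theorem critical_point_symmetric (ρ₁ ρ₂ p₁ p₂ x y : ℝ)
    (hρ₁ : ρ₁ ∈ Set.Ioo (-1 : ℝ) 0) (hρ₂ : ρ₂ ∈ Set.Ioo (-1 : ℝ) 0)
    (hp₁ : 0 < p₁) (hp₂ : 0 < p₂)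
    (heq1 : p₁ * (1 - 2 * stdNormalCDF (Real.sqrt ((1 - ρ₁) / (1 + ρ₁)) * x)) =
      p₂ * stdNormalCDF ((y - ρ₂ * x) / Real.sqrt (1 - ρ₂ ^ 2)))
    (heq2 : p₁ * (1 - 2 * stdNormalCDF (Real.sqrt ((1 - ρ₁) / (1 + ρ₁)) * y)) =
      -(p₂ * stdNormalCDF ((-x + ρ₂ * y) / Real.sqrt (1 - ρ₂ ^ 2)))) :
    x < 0 ∧ 0 < y ∧ y = -x := by
  obtain ⟨hρ₁l, hρ₁r⟩ := hρ₁
  obtain ⟨hρ₂l, hρ₂r⟩ := hρ₂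
  set c := Real.sqrt ((1 - ρ₁) / (1 + ρ₁)) with hc_def
  set s := Real.sqrt (1 - ρ₂ ^ 2) with hs_def
  have hc : 0 < c := Real.sqrt_pos.mpr (div_pos (by linarith) (by linarith))
  have hs : 0 < s := Real.sqrt_pos.mpr (by nlinarith)
  set A := (y - ρ₂ * x) / s with hA_def
  set B := (-x + ρ₂ * y) / s with hB_def
  have hA : 0 < stdNormalCDF A := cdf_pos A
  have hB : 0 < stdNormalCDF B := cdf_pos B
  -- x < 0
  have hcx : stdNormalCDF (c * x) < stdNormalCDF 0 := by
    rw [cdf_zero]; nlinarith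
  have hx : x < 0 := by
    have := cdf_strictMono.lt_iff_lt.mp hcx
    nlinarith
  -- rewrite heq2
  have hsym := cdf_add_neg (c * y)
  have heq2' : p₁ * (1 - 2 * stdNormalCDF (-(c * y))) = p₂ * stdNormalCDF B := by
    rw [show stdNormalCDF (-(c * y)) = 1 - stdNormalCDF (c * y) from by linarith]
    linear_combination -heq2
  -- y > 0
  have hcy : stdNormalCDF (-(c * y)) < stdNormalCDF 0 := by
    rw [cdf_zero]; nlinarith
  have hy : 0 < y := by
    have := cdf_strictMono.lt_iff_lt.mp hcy
    nlinarith
  refine ⟨hx, hy, ?_⟩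
  rcases lt_trichotomy (x + y) 0 with hlt | heqxy | hgt
  · exfalso
    have h1 : c * x < -(c * y) := by nlinarith
    have h2 : stdNormalCDF (c * x) < stdNormalCDF (-(c * y)) := cdf_strictMono h1
    have h3 : A < B := by
      rw [hA_def, hB_def, div_lt_div_iff_of_pos_right hs]
      nlinarith
    have h4 : p₂ * stdNormalCDF A < p₂ * stdNormalCDF B :=
      mul_lt_mul_of_pos_left (cdf_strictMono h3) hp₂
    have h5 : p₁ * stdNormalCDF (c * x) < p₁ * stdNormalCDF (-(c * y)) :=
      mul_lt_mul_of_pos_left h2 hp₁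
    linarith
  · linarith
  · exfalso
    have h1 : -(c * y) < c * x := by nlinarith
    have h2 : stdNormalCDF (-(c * y)) < stdNormalCDF (c * x) := cdf_strictMono h1
    have h3 : B < A := by
      rw [hA_def, hB_def, div_lt_div_iff_of_pos_right hs]
      nlinarith
    have h4 : p₂ * stdNormalCDF B < p₂ * stdNormalCDF A :=
      mul_lt_mul_of_pos_left (cdf_strictMono h3) hp₂
    have h5 : p₁ * stdNormalCDF (-(c * y)) < p₁ * stdNormalCDF (c * x) :=
      mul_lt_mul_of_pos_left h2 hp₁
    linarith
end
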